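/- Under the hypotheses of the main theorem (zero solution of x'(t) = -a(t)x(t-r(t)) uniformly asymptotically stable with exponential estimate, a bounded, r uniformly continuous with values in [0,q]), for each fixed t > 0 the piecewise-constant approximation satisfies |x(t) - z_h([t]_h)| → 0 as h → 0, where [t]_h = [t/h]h. -/

import Mathlib

/-- The piecewise constant deviated argument -/
noncomputable def gammaPCA (h : ℝ) (r : ℝ → ℝ) (t : ℝ) : ℝ :=
  (⌊t / h - (⌊r ((⌊t / h⌋ : ℝ) * h) / h⌋ : ℝ)⌋ : ℝ) * h

/-!
The error `e = x - z_h` has right derivative `-a u * (x (u - r u) - z_h (γ_h u))`, where the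
piecewise constant delay `γ_h u` is a grid point not after `⌊u/h⌋ h` and within `h + wr h` of
`u - r u`. Writing `x (u - r u) - z_h (γ_h u) = (x (u - r u) - x (γ_h u)) + e (γ_h u)`, the first
term is below any given `ε` for small `h` by uniform continuity of `x` on `[-q, t]`, and `e`
vanishes at the initial grid points. So on the `n`-th grid cell the slope of `e` is at most
`a₀ (ε + E_n)`, where `E_n` bounds the error on the earlier cells, which gives the discrete
Gronwall bound `E_n ≤ ε ((1 + a₀ h)^n - 1) ≤ ε e^{a₀ (t + h)}`. Together with `[t]_h → t` and
the continuity of `x` at `t`, this makes `|x t - z_h ([t]_h)|` small.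
-/

open Set Filter Topology Real

theorem floor_div_mul_mem_Icc {t h : ℝ} (ht : 0 ≤ t) (hh : 0 < h) :
    (⌊t / h⌋ : ℝ) * h ∈ Icc 0 t :=
  ⟨mul_nonneg (by exact_mod_cast Int.floor_nonneg.2 (div_nonneg ht hh.le)) hh.le,
    by linarith [Int.sub_floor_div_mul_nonneg t hh]⟩

theorem tendsto_floor_div_mul_nhdsGT_zero (t : ℝ) :
    Tendsto (fun h => (⌊t / h⌋ : ℝ) * h) (𝓝[>] 0) (𝓝 t) := by
  have hlow : Tendsto (fun h => t - h) (𝓝[>] 0) (𝓝 t) := by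
    simpa using tendsto_const_nhds.sub
      (tendsto_nhdsWithin_of_tendsto_nhds (tendsto_id (x := 𝓝 (0 : ℝ))))
  refine tendsto_of_tendsto_of_tendsto_of_le_of_le' hlow tendsto_const_nhds ?_ ?_
  · filter_upwards [self_mem_nhdsWithin] with h hh
    linarith [Int.sub_floor_div_mul_lt t (mem_Ioi.1 hh)]
  · filter_upwards [self_mem_nhdsWithin] with h hh
    linarith [Int.sub_floor_div_mul_nonneg t (mem_Ioi.1 hh)]

theorem tendsto_nhds_zero_of_forall_eventually_abs_le_mul {α : Type*} {l : Filter α}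
    {f : α → ℝ} {C : ℝ} (hC : 0 ≤ C) (hf : ∀ ε > 0, ∀ᶠ a in l, |f a| ≤ ε * C) :
    Tendsto f l (𝓝 0) := by
  rw [Metric.tendsto_nhds]
  intro ε hε
  filter_upwards [hf (ε / (C + 1)) (by positivity)] with a ha
  rw [Real.dist_eq, sub_zero]
  calc |f a| ≤ ε / (C + 1) * C := ha
    _ < ε / (C + 1) * (C + 1) := by gcongr; linarith
    _ = ε := div_mul_cancel₀ ε (by positivity)

section Gronwall

variable {e e' : ℝ → ℝ} {h A ε T : ℝ}

theorem abs_le_one_add_mul_pow_of_grid_delay (hh : 0 < h) (hA : 0 ≤ A) (hε : 0 ≤ ε)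
    (he0 : e 0 = 0) (hcont : ContinuousOn e (Icc 0 T))
    (hderiv : ∀ u ∈ Ico 0 T, HasDerivWithinAt e (e' u) (Ici u) u)
    (hbound : ∀ u ∈ Ico 0 T, ∃ v ∈ Icc 0 (⌊u / h⌋ * h), |e' u| ≤ A * (ε + |e v|)) (n : ℕ) :
    ∀ s ∈ Icc 0 T, s ≤ n * h → |e s| ≤ ε * ((1 + A * h) ^ n - 1) := by
  induction n with
  | zero =>
    intro s hs hs0
    rw [le_antisymm (by simpa using hs0) hs.1, he0]
    simp
  | succ n ih =>
    intro s hs hsn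
    push_cast at hsn
    set Q := ε * ((1 + A * h) ^ n - 1)
    have hQ : 0 ≤ Q := mul_nonneg hε (sub_nonneg.2 (one_le_pow₀ (by nlinarith)))
    have hQ_succ : Q + A * (ε + Q) * h = ε * ((1 + A * h) ^ (n + 1) - 1) := by ring
    have hnh : (0 : ℝ) ≤ n * h := by positivity
    rcases le_or_gt s (n * h) with hle | hgt
    · refine (ih s hs hle).trans ?_
      rw [← hQ_succ]
      exact le_add_of_nonneg_right (by positivity)
    have hslope : ∀ u ∈ Ico (n * h) s, ‖e' u‖ ≤ A * (ε + Q) := by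
      intro u hu
      obtain ⟨v, hv, hv'⟩ := hbound u ⟨hnh.trans hu.1, hu.2.trans_le hs.2⟩
      have hfloor : (⌊u / h⌋ : ℝ) ≤ n := by
        have : ⌊u / h⌋ ≤ (n : ℤ) := Int.floor_le_iff.2 <| by
          rw [div_lt_iff₀ hh]; push_cast; linarith [hu.2]
        exact_mod_cast this
      have hvn : v ≤ n * h := hv.2.trans (mul_le_mul_of_nonneg_right hfloor hh.le)
      rw [Real.norm_eq_abs]
      exact hv'.trans (by gcongr; exact ih v ⟨hv.1, by linarith [hs.2]⟩ hvn)
    have hstep := norm_image_sub_le_of_norm_deriv_right_le_segment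
      (hcont.mono (Icc_subset_Icc hnh hs.2))
      (fun u hu => hderiv u ⟨hnh.trans hu.1, hu.2.trans_le hs.2⟩) hslope s
      (right_mem_Icc.2 hgt.le)
    rw [Real.norm_eq_abs] at hstep
    have hen := ih (n * h) ⟨hnh, by linarith [hs.2]⟩ le_rfl
    have hslope_h : A * (ε + Q) * (s - n * h) ≤ A * (ε + Q) * h :=
      mul_le_mul_of_nonneg_left (by linarith) (by positivity)
    rw [← hQ_succ]
    linarith [abs_sub_abs_le_abs_sub (e s) (e (n * h))]

theorem abs_le_exp_of_grid_delay (hh : 0 < h) (hA : 0 ≤ A) (hε : 0 ≤ ε)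
    (he0 : e 0 = 0) (hcont : ContinuousOn e (Icc 0 T))
    (hderiv : ∀ u ∈ Ico 0 T, HasDerivWithinAt e (e' u) (Ici u) u)
    (hbound : ∀ u ∈ Ico 0 T, ∃ v ∈ Icc 0 (⌊u / h⌋ * h), |e' u| ≤ A * (ε + |e v|)) :
    ∀ s ∈ Icc 0 T, |e s| ≤ ε * (exp (A * (s + h)) - 1) := by
  intro s hs
  set n := ⌈s / h⌉₊
  have hsn : s ≤ n * h := (div_le_iff₀ hh).1 (Nat.le_ceil _)
  have hns : n * h < s + h := by
    have := mul_lt_mul_of_pos_right (Nat.ceil_lt_add_one (div_nonneg hs.1 hh.le)) hh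
    rwa [add_mul, div_mul_cancel₀ _ hh.ne', one_mul] at this
  refine (abs_le_one_add_mul_pow_of_grid_delay hh hA hε he0 hcont hderiv hbound n s hs hsn).trans
    (mul_le_mul_of_nonneg_left (sub_le_sub_right ?_ 1) hε)
  calc (1 + A * h) ^ n ≤ exp (A * h) ^ n :=
        pow_le_pow_left₀ (by positivity) (by linarith [add_one_le_exp (A * h)]) n
    _ = exp (A * (n * h)) := by rw [← exp_nat_mul]; ring_nf
    _ ≤ exp (A * (s + h)) := exp_le_exp.2 (mul_le_mul_of_nonneg_left hns.le hA)

end Gronwall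

section PiecewiseConstantArgument

variable {h q : ℝ} {r : ℝ → ℝ}

theorem gammaPCA_eq (h : ℝ) (r : ℝ → ℝ) (u : ℝ) :
    gammaPCA h r u = ⌊u / h⌋ * h - ⌊r (⌊u / h⌋ * h) / h⌋ * h := by
  rw [gammaPCA, Int.floor_sub_intCast]
  push_cast
  ring

theorem gammaPCA_le_floor_div_mul (hh : 0 < h) {u : ℝ} (hr : 0 ≤ r (⌊u / h⌋ * h)) :
    gammaPCA h r u ≤ ⌊u / h⌋ * h := by
  rw [gammaPCA_eq]
  linarith [(floor_div_mul_mem_Icc hr hh).1]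

theorem neg_le_gammaPCA (hh : 0 < h) {u : ℝ} (hu : 0 ≤ u) (hr : r (⌊u / h⌋ * h) ≤ q) :
    -q ≤ gammaPCA h r u := by
  rw [gammaPCA_eq]
  linarith [(floor_div_mul_mem_Icc hu hh).1, Int.sub_floor_div_mul_nonneg (r (⌊u / h⌋ * h)) hh]

theorem abs_sub_sub_gammaPCA_le (hh : 0 < h) (u : ℝ) :
    |u - r u - gammaPCA h r u| ≤ h + |r u - r (⌊u / h⌋ * h)| := by
  rw [gammaPCA_eq]
  set v := r (⌊u / h⌋ * h)
  have hcell : |(u - ⌊u / h⌋ * h) - (v - ⌊v / h⌋ * h)| ≤ h :=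
    abs_sub_le_iff.2
      ⟨by linarith [Int.sub_floor_div_mul_lt u hh, Int.sub_floor_div_mul_nonneg v hh],
        by linarith [Int.sub_floor_div_mul_nonneg u hh, Int.sub_floor_div_mul_lt v hh]⟩
  calc _ = |((u - ⌊u / h⌋ * h) - (v - ⌊v / h⌋ * h)) - (r u - v)| := by ring_nf
    _ ≤ |(u - ⌊u / h⌋ * h) - (v - ⌊v / h⌋ * h)| + |r u - v| := abs_sub _ _
    _ ≤ h + |r u - v| := by gcongr

theorem eventually_abs_sub_gammaPCA_le {t : ℝ} {x wr : ℝ → ℝ}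
    (hr : ∀ u, 0 ≤ u → r u ∈ Icc 0 q) (hx : ContinuousOn x (Icc (-q) t))
    (hwr_mod : ∀ ℓ, 0 ≤ ℓ → ∀ t₁ t₂, 0 ≤ t₁ → 0 ≤ t₂ → |t₂ - t₁| ≤ ℓ →
      |r t₂ - r t₁| ≤ wr ℓ)
    (hwr_zero : Tendsto wr (𝓝[>] 0) (𝓝 0)) {ε : ℝ} (hε : 0 < ε) :
    ∀ᶠ h in 𝓝[>] 0, ∀ u ∈ Ico 0 t, |x (u - r u) - x (gammaPCA h r u)| ≤ ε := by
  obtain ⟨δ, hδ, hxδ⟩ :=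
    Metric.uniformContinuousOn_iff.1 (isCompact_Icc.uniformContinuousOn_of_continuous hx) ε hε
  have hsmall : Tendsto (fun h => h + wr h) (𝓝[>] 0) (𝓝 0) := by
    simpa using (tendsto_nhdsWithin_of_tendsto_nhds (tendsto_id (x := 𝓝 (0 : ℝ)))).add hwr_zero
  filter_upwards [hsmall.eventually (gt_mem_nhds hδ), self_mem_nhdsWithin]
    with h hδh (hh : 0 < h) u hu
  have hnode := floor_div_mul_mem_Icc hu.1 hh
  have hru : |r u - r (⌊u / h⌋ * h)| ≤ wr h := by
    refine hwr_mod h hh.le _ u hnode.1 hu.1 ?_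
    rw [abs_of_nonneg (Int.sub_floor_div_mul_nonneg u hh)]
    exact (Int.sub_floor_div_mul_lt u hh).le
  obtain ⟨hr₀, hrq⟩ := hr u hu.1
  obtain ⟨hnode₀, hnodeq⟩ := hr _ hnode.1
  have hγ : gammaPCA h r u ≤ u := (gammaPCA_le_floor_div_mul hh hnode₀).trans hnode.2
  refine (hxδ _ ⟨by linarith [hu.1], by linarith [hu.2]⟩ _
    ⟨neg_le_gammaPCA hh hu.1 hnodeq, by linarith [hu.2]⟩ ?_).le
  rw [Real.dist_eq]
  linarith [abs_sub_sub_gammaPCA_le (r := r) hh u]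

theorem abs_sub_le_of_hasDerivWithinAt_gammaPCA {a₀ ε T : ℝ} {a x z : ℝ → ℝ}
    (hh : 0 < h) (hε : 0 ≤ ε)
    (ha : ∀ u, 0 ≤ u → |a u| ≤ a₀) (hr : ∀ u, 0 ≤ u → r u ∈ Icc 0 q)
    (hx_cont : ContinuousOn x (Icc 0 T)) (hz_cont : ContinuousOn z (Icc 0 T))
    (hx_deriv : ∀ u, 0 ≤ u → HasDerivWithinAt x (-(a u) * x (u - r u)) (Ici u) u)
    (hz_deriv : ∀ u, 0 ≤ u → HasDerivWithinAt z (-(a u) * z (gammaPCA h r u)) (Ici u) u)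
    (hz_node : ∀ k : ℤ, -q ≤ k * h → k * h ≤ 0 → z (k * h) = x (k * h))
    (hforce : ∀ u ∈ Ico 0 T, |x (u - r u) - x (gammaPCA h r u)| ≤ ε) :
    ∀ s ∈ Icc 0 T, |x s - z s| ≤ ε * (exp (a₀ * (s + h)) - 1) := by
  have ha₀ : 0 ≤ a₀ := (abs_nonneg _).trans (ha 0 le_rfl)
  have he0 : x 0 - z 0 = 0 := by
    have hq : 0 ≤ q := (hr 0 le_rfl).1.trans (hr 0 le_rfl).2
    rw [sub_eq_zero]
    simpa using (hz_node 0 (by simpa using hq) (by simp)).symm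
  refine abs_le_exp_of_grid_delay (e := fun s => x s - z s) hh ha₀ hε he0
    (hx_cont.sub hz_cont) (fun u hu => (hx_deriv u hu.1).sub (hz_deriv u hu.1)) ?_
  intro u hu
  have hnode := floor_div_mul_mem_Icc hu.1 hh
  obtain ⟨hnode₀, hnodeq⟩ := hr _ hnode.1
  -- A delayed argument at or before time `0` is a grid point of the initial data, where `z = x`.
  have hdelay : ∃ v ∈ Icc 0 (⌊u / h⌋ * h),
      |x (u - r u) - z (gammaPCA h r u)| ≤ ε + |x v - z v| := by
    rcases le_or_gt (gammaPCA h r u) 0 with hneg | hpos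
    · refine ⟨0, left_mem_Icc.2 hnode.1, ?_⟩
      have hzx : z (gammaPCA h r u) = x (gammaPCA h r u) :=
        hz_node _ (neg_le_gammaPCA hh hu.1 hnodeq) hneg
      rw [hzx]
      exact le_add_of_le_of_nonneg (hforce u hu) (abs_nonneg _)
    · refine ⟨gammaPCA h r u, ⟨hpos.le, gammaPCA_le_floor_div_mul hh hnode₀⟩, ?_⟩
      linarith [abs_sub_le (x (u - r u)) (x (gammaPCA h r u)) (z (gammaPCA h r u)), hforce u hu]
  obtain ⟨v, hv, hdv⟩ := hdelay
  refine ⟨v, hv, ?_⟩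
  rw [← mul_sub, abs_mul, abs_neg]
  exact mul_le_mul (ha u hu.1) hdv (abs_nonneg _) ha₀

end PiecewiseConstantArgument

theorem pointwise_convergence_nodal_general
    (q a₀ : ℝ) (hq : 0 < q)
    (a : ℝ → ℝ)
    (ha_bdd : ∀ t, 0 ≤ t → |a t| ≤ a₀)
    (r : ℝ → ℝ) (hr : ∀ t, 0 ≤ t → r t ∈ Set.Icc 0 q)
    (wr : ℝ → ℝ)
    (hwr_mod : ∀ ℓ, 0 ≤ ℓ → ∀ t₁ t₂, 0 ≤ t₁ → 0 ≤ t₂ → |t₂ - t₁| ≤ ℓ →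
      |r t₂ - r t₁| ≤ wr ℓ)
    (hwr_zero : Filter.Tendsto wr (nhdsWithin 0 (Set.Ioi 0)) (nhds 0))
    (φ : ℝ → ℝ)
    (x : ℝ → ℝ) (hx_cont : ContinuousOn x (Set.Ici (-q)))
    (hx_init : ∀ t ∈ Set.Icc (-q) (0 : ℝ), x t = φ t)
    (hx_deriv : ∀ t, 0 ≤ t →
      HasDerivWithinAt x (-(a t) * x (t - r t)) (Set.Ici t) t)
    (zf : ℝ → ℝ → ℝ)
    (hz_cont : ∀ h, 0 < h → h ≤ q → ContinuousOn (zf h) (Set.Ici 0))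
    (hz_init : ∀ h, 0 < h → h ≤ q → ∀ n : ℤ, -(q / h) ≤ (n : ℝ) → (n : ℝ) ≤ 0 →
      zf h ((n : ℝ) * h) = φ ((n : ℝ) * h))
    (hz_deriv : ∀ h, 0 < h → h ≤ q → ∀ t, 0 ≤ t →
      HasDerivWithinAt (zf h) (-(a t) * zf h (gammaPCA h r t)) (Set.Ici t) t) :
    ∀ t, 0 < t →
      Filter.Tendsto (fun h => |x t - zf h ((⌊t / h⌋ : ℝ) * h)|)
        (nhdsWithin 0 (Set.Ioi 0)) (nhds 0) := by
  intro t ht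
  have hx_node : Tendsto (fun h => x (⌊t / h⌋ * h)) (𝓝[>] 0) (𝓝 (x t)) :=
    (hx_cont t (mem_Ici.2 (by linarith))).tendsto.comp <| tendsto_nhdsWithin_iff.2
      ⟨tendsto_floor_div_mul_nhdsGT_zero t, eventually_nhdsWithin_of_forall fun h hh =>
        (neg_nonpos.2 hq.le).trans (floor_div_mul_mem_Icc ht.le hh).1⟩
  have herr : Tendsto (fun h => |x (⌊t / h⌋ * h) - zf h (⌊t / h⌋ * h)|) (𝓝[>] 0) (𝓝 0) := by
    refine tendsto_nhds_zero_of_forall_eventually_abs_le_mul (exp_pos (a₀ * (t + q))).le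
      fun ε hε => ?_
    filter_upwards [eventually_abs_sub_gammaPCA_le hr (hx_cont.mono Icc_subset_Ici_self) hwr_mod
      hwr_zero hε, Ioo_mem_nhdsGT hq] with h hforce ⟨hh, hhq⟩
    have hz_node : ∀ k : ℤ, -q ≤ k * h → k * h ≤ 0 → zf h (k * h) = x (k * h) := fun k hk₁ hk₂ =>
      (hz_init h hh hhq.le k (by rw [← neg_div, div_le_iff₀ hh]; exact hk₁)
        (nonpos_of_mul_nonpos_left hk₂ hh)).trans (hx_init _ ⟨hk₁, hk₂⟩).symm
    have hnode := floor_div_mul_mem_Icc ht.le hh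
    rw [abs_abs]
    refine (abs_sub_le_of_hasDerivWithinAt_gammaPCA hh hε.le ha_bdd hr
      (hx_cont.mono (Icc_subset_Ici_self.trans (Ici_subset_Ici.2 (by linarith))))
      ((hz_cont h hh hhq.le).mono Icc_subset_Ici_self) hx_deriv (hz_deriv h hh hhq.le)
      hz_node hforce _ hnode).trans (mul_le_mul_of_nonneg_left ?_ hε.le)
    have ha₀ : 0 ≤ a₀ := (abs_nonneg _).trans (ha_bdd 0 le_rfl)
    linarith [exp_le_exp.2 (mul_le_mul_of_nonneg_left (add_le_add hnode.2 hhq.le) ha₀)]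
  refine squeeze_zero (fun _ => abs_nonneg _) (fun h => abs_sub_le _ (x (⌊t / h⌋ * h)) _) ?_
  simpa using ((tendsto_const_nhds (x := x t)).sub hx_node).abs.add herr

/-- Corollary 4.2(1): pointwise convergence of the nodal approximations. -/
theorem pointwise_convergence_nodal
    (q σ K a₀ M₀ : ℝ) (hq : 0 < q) (hσ : 0 < σ) (hK : 0 < K)
    (a : ℝ → ℝ) (ha_nonneg : ∀ t, 0 ≤ t → 0 ≤ a t)
    (ha_bdd : ∀ t, 0 ≤ t → |a t| ≤ a₀)
    (r : ℝ → ℝ) (hr : ∀ t, 0 ≤ t → r t ∈ Set.Icc 0 q)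
    (wr : ℝ → ℝ) (hwr_nonneg : ∀ ℓ, 0 ≤ wr ℓ) (hwr_mono : Monotone wr)
    (hwr_mod : ∀ ℓ, 0 ≤ ℓ → ∀ t₁ t₂, 0 ≤ t₁ → 0 ≤ t₂ → |t₂ - t₁| ≤ ℓ →
      |r t₂ - r t₁| ≤ wr ℓ)
    (hwr_zero : Filter.Tendsto wr (nhdsWithin 0 (Set.Ioi 0)) (nhds 0))
    (U : ℝ → ℝ → (ℝ → ℝ) → ℝ)
    (hU : ∀ (t s : ℝ) (ψ : ℝ → ℝ), s ≤ t →
      |U t s ψ| ≤ K * sSup ((fun θ => |ψ θ|) '' Set.Icc (-q) 0) * Real.exp (-σ * (t - s)))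
    (φ : ℝ → ℝ) (hφ : ContinuousOn φ (Set.Icc (-q) 0))
    (x : ℝ → ℝ) (hx_cont : ContinuousOn x (Set.Ici (-q)))
    (hx_init : ∀ t ∈ Set.Icc (-q) (0 : ℝ), x t = φ t)
    (hx_deriv : ∀ t, 0 ≤ t →
      HasDerivWithinAt x (-(a t) * x (t - r t)) (Set.Ici t) t)
    (hx_bound : ∀ t, 0 ≤ t →
      |x t| ≤ M₀ * sSup ((fun θ => |φ θ|) '' Set.Icc (-q) 0) * Real.exp (-σ * t))
    (zf : ℝ → ℝ → ℝ)
    (hz_cont : ∀ h, 0 < h → h ≤ q → ContinuousOn (zf h) (Set.Ici 0))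
    (hz_init : ∀ h, 0 < h → h ≤ q → ∀ n : ℤ, -(q / h) ≤ (n : ℝ) → (n : ℝ) ≤ 0 →
      zf h ((n : ℝ) * h) = φ ((n : ℝ) * h))
    (hz_deriv : ∀ h, 0 < h → h ≤ q → ∀ t, 0 ≤ t →
      HasDerivWithinAt (zf h) (-(a t) * zf h (gammaPCA h r t)) (Set.Ici t) t) :
    ∀ t, 0 < t →
      Filter.Tendsto (fun h => |x t - zf h ((⌊t / h⌋ : ℝ) * h)|)
        (nhdsWithin 0 (Set.Ioi 0)) (nhds 0) :=
  pointwise_convergence_nodal_general q a₀ hq a ha_bdd r hr wr hwr_mod hwr_zero φ x hx_cont hx_init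
    hx_deriv zf hz_cont hz_init hz_deriv
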